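/- arXiv:1111.1475 — 8 statements merged into one kernel-verified Lean document; each statement's English description precedes it below -/
import Mathlib

section
/- For real symmetric n×n matrices A₁,…,A_k, the real Lie algebra generated by A₁,…,A_k equals gl(n,ℝ) if and only if the real Lie algebra generated by iA₁,…,iA_k equals u(n) (the skew-Hermitian n×n complex matrices). -/
/-!
Unitary trick. `gl(n, ℝ)` and `u(n)` are both real forms of `gl(n, ℂ)`: a real Lie subalgebra of
either one is everything iff its complexification `h + i h` is all of `gl(n, ℂ)`. The real Lie
algebras generated by the `A j` and by the `i A j` have the same complexification, namely the
complex Lie algebra generated by the `A j`; symmetry of the `A j` is what puts the second one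
inside `u(n)`.
-/

open Matrix Complex ComplexStarModule

attribute [local instance 100] LieRing.ofAssociativeRing

theorem IsSelfAdjoint.eq_zero_of_mem_skewAdjoint {A : Type*} [AddCommGroup A] [StarAddMonoid A]
    [Module ℂ A] {y : A} (hy : IsSelfAdjoint y) (hy' : y ∈ skewAdjoint A) : y = 0 := by
  have h2y : y + y = 0 := eq_neg_iff_add_eq_zero.mp (hy.star_eq.symm.trans hy')
  rwa [← two_smul ℂ, smul_eq_zero, or_iff_right two_ne_zero] at h2y

def skewAdjoint.lieSubalgebra (R A : Type*) [CommRing R] [StarRing R] [TrivialStar R] [Ring A]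
    [StarRing A] [Algebra R A] [StarModule R A] : LieSubalgebra R A where
  __ := skewAdjoint A
  smul_mem' r _ hx := skewAdjoint.smul_mem r hx
  lie_mem' {x y} hx hy := by
    change star x = -x at hx
    change star y = -y at hy
    change star ⁅x, y⁆ = -⁅x, y⁆
    rw [Ring.lie_def, star_sub, star_mul, star_mul, hx, hy, neg_mul_neg, neg_mul_neg, neg_sub]

@[simp]
theorem skewAdjoint.mem_lieSubalgebra {R A : Type*} [CommRing R] [StarRing R] [TrivialStar R]
    [Ring A] [StarRing A] [Algebra R A] [StarModule R A] {x : A} :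
    x ∈ skewAdjoint.lieSubalgebra R A ↔ x ∈ skewAdjoint A :=
  Iff.rfl

namespace LieSubalgebra

section Complexify

variable {L : Type*} [LieRing L] [LieAlgebra ℂ L] [LieAlgebra ℝ L] [IsScalarTower ℝ ℂ L]

def complexify (h : LieSubalgebra ℝ L) : LieSubalgebra ℂ L where
  carrier := {x | ∃ a ∈ h, ∃ b ∈ h, a + I • b = x}
  add_mem' := by
    rintro _ _ ⟨a, ha, b, hb, rfl⟩ ⟨c, hc, d, hd, rfl⟩
    exact ⟨a + c, h.add_mem ha hc, b + d, h.add_mem hb hd, by module⟩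
  zero_mem' := ⟨0, h.zero_mem, 0, h.zero_mem, by simp⟩
  smul_mem' := by
    rintro z _ ⟨a, ha, b, hb, rfl⟩
    refine ⟨z.re • a - z.im • b, h.sub_mem (h.smul_mem _ ha) (h.smul_mem _ hb),
      z.re • b + z.im • a, h.add_mem (h.smul_mem _ hb) (h.smul_mem _ ha), ?_⟩
    conv_rhs => rw [← re_add_im z]
    linear_combination (norm := module) -(I_sq • (z.im • b))
  lie_mem' := by
    rintro _ _ ⟨a, ha, b, hb, rfl⟩ ⟨c, hc, d, hd, rfl⟩
    refine ⟨⁅a, c⁆ - ⁅b, d⁆, h.sub_mem (h.lie_mem ha hc) (h.lie_mem hb hd),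
      ⁅a, d⁆ + ⁅b, c⁆, h.add_mem (h.lie_mem ha hd) (h.lie_mem hb hc), ?_⟩
    simp only [lie_add, add_lie, lie_smul, smul_lie]
    linear_combination (norm := module) -(I_sq • ⁅b, d⁆)

theorem subset_complexify (h : LieSubalgebra ℝ L) : (h : Set L) ⊆ h.complexify :=
  fun a ha => ⟨a, ha, 0, h.zero_mem, by simp⟩

theorem lieSpan_real_subset_lieSpan (s : Set L) :
    (lieSpan ℝ L s : Set L) ⊆ lieSpan ℂ L s := by
  intro x hx
  induction hx using lieSpan_induction with
  | mem x hx => exact subset_lieSpan hx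
  | zero => exact zero_mem _
  | add x y _ _ hx hy => exact add_mem hx hy
  | smul r x _ hx => exact (algebraMap_smul ℂ r x) ▸ (lieSpan ℂ L s).smul_mem _ hx
  | lie x y _ _ hx hy => exact lie_mem _ hx hy

theorem complexify_lieSpan (s : Set L) : (lieSpan ℝ L s).complexify = lieSpan ℂ L s := by
  refine le_antisymm ?_ (lieSpan_le.mpr ((subset_complexify _).trans' subset_lieSpan))
  rintro _ ⟨a, ha, b, hb, rfl⟩
  exact add_mem (lieSpan_real_subset_lieSpan s ha)
    ((lieSpan ℂ L s).smul_mem _ (lieSpan_real_subset_lieSpan s hb))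

end Complexify

theorem lieSpan_range_smul {K L ι : Type*} [Field K] [LieRing L] [LieAlgebra K L] {c : K}
    (hc : c ≠ 0) (f : ι → L) :
    lieSpan K L (Set.range fun i => c • f i) = lieSpan K L (Set.range f) := by
  refine le_antisymm (lieSpan_le.mpr ?_) (lieSpan_le.mpr ?_) <;> rintro _ ⟨i, rfl⟩
  · exact (lieSpan K L _).smul_mem c (subset_lieSpan ⟨i, rfl⟩)
  · rw [← inv_smul_smul₀ hc (f i)]
    exact (lieSpan K L _).smul_mem c⁻¹ (subset_lieSpan ⟨i, rfl⟩)

section SkewAdjoint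

variable {A : Type*} [Ring A] [StarRing A] [Algebra ℂ A] [StarModule ℂ A] [Algebra ℝ A]
  [StarModule ℝ A] [IsScalarTower ℝ ℂ A]

theorem eq_skewAdjoint_iff_complexify_eq_top {h : LieSubalgebra ℝ A}
    (hh : h ≤ skewAdjoint.lieSubalgebra ℝ A) :
    h = skewAdjoint.lieSubalgebra ℝ A ↔ h.complexify = ⊤ := by
  constructor
  · rintro rfl
    refine eq_top_iff.mpr fun x _ => ⟨I • ℑ x, ?_, -(I • ℜ x), neg_mem ?_, ?_⟩
    · exact I_smul_mem_skewAdjoint_iff_isSelfAdjoint.mpr (ℑ x).2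
    · exact I_smul_mem_skewAdjoint_iff_isSelfAdjoint.mpr (ℜ x).2
    · rw [smul_neg, smul_smul, I_mul_I, neg_one_smul, neg_neg, add_comm,
        realPart_add_I_smul_imaginaryPart]
  · intro htop
    refine le_antisymm hh fun x hx => ?_
    obtain ⟨a, ha, b, hb, rfl⟩ := htop ▸ mem_top x
    have hIb : I • b = 0 := by
      refine (isSelfAdjoint_I_smul_iff_mem_skewAdjoint.mpr (hh hb)).eq_zero_of_mem_skewAdjoint ?_
      simpa only [add_sub_cancel_left, skewAdjoint.mem_lieSubalgebra] using sub_mem hx (hh ha)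
    simpa [hIb] using ha

end SkewAdjoint

end LieSubalgebra

open LieSubalgebra

namespace Matrix

variable {m : Type*}

theorem map_re_ofReal_add_I_smul (a b : Matrix m m ℝ) :
    (a.map ofReal + I • b.map ofReal).map re = a := by
  ext; simp

theorem map_re_ofReal_add_I_smul_map_im_ofReal (Z : Matrix m m ℂ) :
    (Z.map re).map ofReal + I • (Z.map im).map ofReal = Z := by
  ext; simp [mul_comm I, re_add_im]

variable [Fintype m] [DecidableEq m]

noncomputable abbrev ofRealLieHom : Matrix m m ℝ →ₗ⁅ℝ⁆ Matrix m m ℂ :=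
  ofRealAm.mapMatrix.toLieHom

theorem complexify_map_ofRealLieHom_eq_top_iff (g : LieSubalgebra ℝ (Matrix m m ℝ)) :
    (g.map ofRealLieHom).complexify = ⊤ ↔ g = ⊤ := by
  constructor
  · intro htop
    refine eq_top_iff.mpr fun M _ => ?_
    obtain ⟨_, ⟨a, ha, rfl⟩, _, ⟨b, -, rfl⟩, hab⟩ := htop ▸ mem_top (M.map ofReal)
    have hMa : a = M := calc
      a = (a.map ofReal + I • b.map ofReal).map re := (map_re_ofReal_add_I_smul a b).symm
      _ = (M.map ofReal).map re := congrArg (·.map re) hab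
      _ = M := by ext; simp
    exact hMa ▸ ha
  · rintro rfl
    refine eq_top_iff.mpr fun Z _ =>
      ⟨_, ?_, _, ?_, map_re_ofReal_add_I_smul_map_im_ofReal Z⟩ <;>
      exact (mem_map _ _ _).mpr ⟨_, mem_top _, rfl⟩

end Matrix

/-- For real symmetric n×n matrices A₁,…,A_k, the real Lie algebra generated by
the A_j equals gl(n,ℝ) iff the real Lie algebra generated by the iA_j equals u(n). -/
theorem stmt_0 (n k : ℕ) (A : Fin k → Matrix (Fin n) (Fin n) ℝ)
    (hsymm : ∀ j, (A j).IsSymm) :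
    LieSubalgebra.lieSpan ℝ (Matrix (Fin n) (Fin n) ℝ) (Set.range A) = ⊤ ↔
    (LieSubalgebra.lieSpan ℝ (Matrix (Fin n) (Fin n) ℂ)
        (Set.range fun j => Complex.I • (A j).map (Complex.ofReal)) :
        Set (Matrix (Fin n) (Fin n) ℂ))
      = {X : Matrix (Fin n) (Fin n) ℂ | Xᴴ = -X} := by
  have hskew : lieSpan ℝ _ (Set.range fun j => I • (A j).map ofReal) ≤
      skewAdjoint.lieSubalgebra ℝ (Matrix (Fin n) (Fin n) ℂ) := by
    refine lieSpan_le.mpr ?_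
    rintro _ ⟨j, rfl⟩
    exact I_smul_mem_skewAdjoint_iff_isSelfAdjoint.mpr
      ((isHermitian_iff_isSymm.mpr (hsymm j)).map ofReal fun x => (conj_ofReal x).symm)
  have hcomplexify : ((lieSpan ℝ _ (Set.range A)).map ofRealLieHom).complexify =
      (lieSpan ℝ _ (Set.range fun j => I • (A j).map ofReal)).complexify := by
    rw [map_lieSpan, complexify_lieSpan, complexify_lieSpan, lieSpan_range_smul I_ne_zero,
      ← Set.range_comp]
    rfl
  rw [← complexify_map_ofRealLieHom_eq_top_iff, hcomplexify,
    ← eq_skewAdjoint_iff_complexify_eq_top hskew, SetLike.ext'_iff]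
  rfl
end

section
/- Let A and L be real symmetric n×n matrices such that the real Lie algebra generated by iA and iL is all of u(n). Then the span S of all iterated brackets ad_{iA}^{k₁} ad_{iL}^{k₂} ⋯ ad_{iA}^{k_{s−1}} ad_{iL}^{k_s} [iA,iL] (over all nonnegative integer exponents) equals su(n). -/
open Matrix

attribute [local instance 100] LieRing.ofAssociativeRing

/-!
Let `g` be the Lie algebra generated by `x` and `y`, and `S` the span of the iterated brackets.
`S` is stable under `ad x` and `ad y`, hence under `ad g`, and with the Jacobi identity this gives
`⁅g, g⁆ ⊆ S`; conversely every iterated bracket is a bracket of two elements of `g`. So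
`S = ⁅g, g⁆`, and for `g = u(n)` it remains to see `⁅u(n), u(n)⁆ = su(n)`. A skew-Hermitian `X`
differs from its diagonal by `⁅D, Y⁆` with `D = i • diagonal (0, 1, …, n - 1)`, whose
eigenvalue gaps can be divided out entrywise; a traceless imaginary diagonal is a sum of the
brackets `⁅E_jk - E_kj, c (E_jk + E_kj)⁆ = 2c (E_jj - E_kk)`.
-/

namespace LieAlgebra

open LieSubalgebra

variable {R L : Type*} [CommRing R] [LieRing L] [LieAlgebra R L]

variable (R) in
def bracketWordSpan (x y : L) : Submodule R L :=
  Submodule.span R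
    {X | ∃ w : List Bool, X = w.foldr (fun b Y => if b then ⁅x, Y⁆ else ⁅y, Y⁆) ⁅x, y⁆}

variable {x y a b z : L}

lemma lie_mem_bracketWordSpan_of_mem_pair (ha : a ∈ ({x, y} : Set L))
    (hz : z ∈ bracketWordSpan R x y) : ⁅a, z⁆ ∈ bracketWordSpan R x y := by
  suffices bracketWordSpan R x y ≤ (bracketWordSpan R x y).comap (ad R L a) from this hz
  refine Submodule.span_le.mpr ?_
  rintro _ ⟨w, rfl⟩
  rcases ha with rfl | rfl
  exacts [Submodule.subset_span ⟨true :: w, rfl⟩, Submodule.subset_span ⟨false :: w, rfl⟩]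

lemma lie_mem_bracketWordSpan (ha : a ∈ lieSpan R L {x, y})
    (hz : z ∈ bracketWordSpan R x y) : ⁅a, z⁆ ∈ bracketWordSpan R x y := by
  induction ha using lieSpan_induction generalizing z with
  | mem a ha => exact lie_mem_bracketWordSpan_of_mem_pair ha hz
  | zero => rw [zero_lie]; exact zero_mem _
  | add a b _ _ iha ihb => rw [add_lie]; exact add_mem (iha hz) (ihb hz)
  | smul r a _ ih => rw [smul_lie]; exact Submodule.smul_mem _ r (ih hz)
  | lie a b _ _ iha ihb => rw [lie_lie]; exact sub_mem (iha (ihb hz)) (ihb (iha hz))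

lemma lie_mem_bracketWordSpan_of_forall_mem_pair
    (hpair : ∀ c ∈ ({x, y} : Set L), ⁅a, c⁆ ∈ bracketWordSpan R x y)
    (hb : b ∈ lieSpan R L {x, y}) : ⁅a, b⁆ ∈ bracketWordSpan R x y := by
  induction hb using lieSpan_induction with
  | mem c hc => exact hpair c hc
  | zero => rw [lie_zero]; exact zero_mem _
  | add b c _ _ ihb ihc => rw [lie_add]; exact add_mem ihb ihc
  | smul r b _ ih => rw [lie_smul]; exact Submodule.smul_mem _ r ih
  | lie b c hb hc ihb ihc =>
    rw [leibniz_lie, ← lie_skew]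
    exact add_mem (neg_mem (lie_mem_bracketWordSpan hc ihb)) (lie_mem_bracketWordSpan hb ihc)

lemma lie_mem_bracketWordSpan_of_mem_lieSpan (ha : a ∈ lieSpan R L {x, y})
    (hb : b ∈ lieSpan R L {x, y}) : ⁅a, b⁆ ∈ bracketWordSpan R x y := by
  have hxy : ⁅x, y⁆ ∈ bracketWordSpan R x y := Submodule.subset_span ⟨[], rfl⟩
  have hpair : ∀ c ∈ ({x, y} : Set L), ∀ d ∈ lieSpan R L {x, y},
      ⁅c, d⁆ ∈ bracketWordSpan R x y := by
    intro c hc d hd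
    refine lie_mem_bracketWordSpan_of_forall_mem_pair ?_ hd
    rintro e he
    rcases hc with rfl | rfl <;> rcases he with rfl | rfl
    · rw [lie_self]; exact zero_mem _
    · exact hxy
    · rw [← lie_skew]; exact neg_mem hxy
    · rw [lie_self]; exact zero_mem _
  refine lie_mem_bracketWordSpan_of_forall_mem_pair (fun c hc => ?_) hb
  rw [← lie_skew]
  exact neg_mem (hpair c hc a ha)

lemma foldr_mem_lieSpan (w : List Bool) :
    w.foldr (fun b Y => if b then ⁅x, Y⁆ else ⁅y, Y⁆) ⁅x, y⁆ ∈ lieSpan R L {x, y} := by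
  induction w with
  | nil => exact lie_mem _ (subset_lieSpan (by simp)) (subset_lieSpan (by simp))
  | cons b w ih => cases b <;> exact lie_mem _ (subset_lieSpan (by simp)) ih

theorem bracketWordSpan_eq_span_lie_lieSpan :
    bracketWordSpan R x y = Submodule.span R
      (Set.image2 (⁅·, ·⁆) (lieSpan R L {x, y} : Set L) (lieSpan R L {x, y})) := by
  have hx : x ∈ lieSpan R L {x, y} := subset_lieSpan (Set.mem_insert _ _)
  have hy : y ∈ lieSpan R L {x, y} := subset_lieSpan (Set.mem_insert_of_mem _ rfl)
  refine le_antisymm (Submodule.span_le.mpr ?_) (Submodule.span_le.mpr ?_)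
  · rintro _ ⟨w | ⟨b, w⟩, rfl⟩
    · exact Submodule.subset_span ⟨x, hx, y, hy, rfl⟩
    · cases b
      · exact Submodule.subset_span ⟨y, hy, _, foldr_mem_lieSpan w, rfl⟩
      · exact Submodule.subset_span ⟨x, hx, _, foldr_mem_lieSpan w, rfl⟩
  · rintro _ ⟨a, ha, b, hb, rfl⟩
    exact lie_mem_bracketWordSpan_of_mem_lieSpan ha hb

end LieAlgebra

namespace Matrix

variable {n α : Type*} [Fintype n] [DecidableEq n]

lemma lie_diagonal_apply [CommRing α] (d : n → α) (Y : Matrix n n α) (j k : n) :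
    ⁅diagonal d, Y⁆ j k = (d j - d k) * Y j k := by
  rw [Ring.lie_def, sub_apply, diagonal_mul, mul_diagonal]
  ring

lemma lie_single_sub_single [CommRing α] (j k : n) (c : α) :
    ⁅single j k (1 : α) - single k j 1, single j k c + single k j c⁆
      = single j j (2 * c) - single k k (2 * c) := by
  obtain rfl | h := eq_or_ne j k
  · simp
  rw [Ring.lie_def]
  simp only [Matrix.add_mul, Matrix.mul_add, Matrix.sub_mul, Matrix.mul_sub,
    single_mul_single_same, single_mul_single_of_ne _ _ _ _ h,
    single_mul_single_of_ne _ _ _ _ h.symm, one_mul, mul_one, two_mul, single_add]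
  abel

lemma lie_diagonal_offDiag_div [Field α] {d : n → α} (hd : Function.Injective d)
    (X : Matrix n n α) :
    ⁅diagonal d, of fun j k => if j = k then 0 else X j k / (d j - d k)⁆
      = X - diagonal X.diag := by
  ext j k
  rw [lie_diagonal_apply, of_apply, sub_apply]
  split_ifs with h
  · subst h; simp
  · rw [mul_div_cancel₀ _ (sub_ne_zero.mpr (hd.ne h)), diagonal_apply_ne _ h, sub_zero]

variable (n) in
noncomputable def specialUnitaryLieAlgebra : Submodule ℝ (Matrix n n ℂ) :=
  skewAdjoint.submodule ℝ (Matrix n n ℂ) ⊓ LinearMap.ker (traceLinearMap n ℝ ℂ)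

lemma lie_mem_specialUnitaryLieAlgebra {X Y : Matrix n n ℂ} (hX : Xᴴ = -X) (hY : Yᴴ = -Y) :
    ⁅X, Y⁆ ∈ specialUnitaryLieAlgebra n := by
  refine ⟨?_, ?_⟩
  · show (X * Y - Y * X)ᴴ = -(X * Y - Y * X)
    rw [conjTranspose_sub, conjTranspose_mul, conjTranspose_mul, hX, hY]
    noncomm_ring
  · show (X * Y - Y * X).trace = 0
    rw [trace_sub, trace_mul_comm, sub_self]

lemma sub_diagonal_mem_span_lie {X : Matrix n n ℂ} (hX : Xᴴ = -X) :
    X - diagonal X.diag ∈ Submodule.span ℝ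
      (Set.image2 (⁅·, ·⁆) {X : Matrix n n ℂ | Xᴴ = -X} {X | Xᴴ = -X}) := by
  set d : n → ℂ := fun j => Complex.I * (Fintype.equivFin n j : ℂ)
  have hd : Function.Injective d := fun j k h =>
    (Fintype.equivFin n).injective (Fin.ext (by simpa [d, Complex.I_ne_zero] using h))
  have hdstar : ∀ j, star (d j) = -d j := fun j => by simp [d]
  rw [← lie_diagonal_offDiag_div hd X]
  refine Submodule.subset_span ⟨_, ?_, _, ?_, rfl⟩
  · show (diagonal d)ᴴ = -diagonal d
    rw [diagonal_conjTranspose, diagonal_neg]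
    exact congrArg diagonal (funext hdstar)
  · show _ = _
    ext j k
    have hXkj : star (X k j) = -X j k := by
      simpa using congrFun (congrFun hX j) k
    obtain rfl | h := eq_or_ne j k
    · simp
    simp only [conjTranspose_apply, of_apply, neg_apply, if_neg h, if_neg h.symm]
    rw [star_div₀, star_sub, hdstar, hdstar, hXkj, neg_sub_neg, neg_div, ← div_neg, neg_sub]

lemma diagonal_mem_span_lie {c : n → ℂ} (hc : ∀ j, star (c j) = -c j) (hsum : ∑ j, c j = 0) :
    diagonal c ∈ Submodule.span ℝ
      (Set.image2 (⁅·, ·⁆) {X : Matrix n n ℂ | Xᴴ = -X} {X | Xᴴ = -X}) := by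
  cases isEmpty_or_nonempty n with
  | inl _ => rw [Subsingleton.elim (diagonal c) 0]; exact zero_mem _
  | inr hn =>
    obtain ⟨k⟩ := hn
    have hdiag : diagonal c = ∑ j, ⁅single j k (1 : ℂ) - single k j 1,
        single j k (c j / 2) + single k j (c j / 2)⁆ := by
      simp_rw [lie_single_sub_single, mul_div_cancel₀ _ (two_ne_zero' ℂ)]
      have hsingle : ∑ j, single k k (c j) = single k k (∑ j, c j) :=
        (map_sum (singleAddMonoidHom k k) c _).symm
      rw [Finset.sum_sub_distrib, sum_single_eq_diagonal, hsingle, hsum, single_zero, sub_zero]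
    rw [hdiag]
    refine Submodule.sum_mem _ fun j _ => Submodule.subset_span ⟨_, ?_, _, ?_, rfl⟩
    · show _ = _
      rw [conjTranspose_sub, conjTranspose_single, conjTranspose_single, star_one, neg_sub]
    · show _ = _
      rw [conjTranspose_add, conjTranspose_single, conjTranspose_single, star_div₀, hc,
        star_ofNat, neg_div, ← single_neg, ← single_neg, neg_add_rev]

theorem span_lie_skewHermitian_eq :
    Submodule.span ℝ (Set.image2 (⁅·, ·⁆) {X : Matrix n n ℂ | Xᴴ = -X} {X | Xᴴ = -X})
      = specialUnitaryLieAlgebra n := by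
  refine le_antisymm (Submodule.span_le.mpr ?_) fun X ⟨hX, htr⟩ => ?_
  · rintro _ ⟨X, hX, Y, hY, rfl⟩
    exact lie_mem_specialUnitaryLieAlgebra hX hY
  · have hdiag : ∀ j, star (X j j) = -X j j := fun j => by
      simpa using congrFun (congrFun hX j) j
    rw [← sub_add_cancel X (diagonal X.diag)]
    exact add_mem (sub_diagonal_mem_span_lie hX) (diagonal_mem_span_lie hdiag htr)

end Matrix

theorem stmt_3_general (n : ℕ)
    (iA : Matrix (Fin n) (Fin n) ℂ) (iL : Matrix (Fin n) (Fin n) ℂ)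
    (hgen : (LieSubalgebra.lieSpan ℝ (Matrix (Fin n) (Fin n) ℂ) {iA, iL} :
        Set (Matrix (Fin n) (Fin n) ℂ)) = {X | Xᴴ = -X}) :
    (Submodule.span ℝ
        {X : Matrix (Fin n) (Fin n) ℂ |
          ∃ w : List Bool,
            X = w.foldr (fun b Y => if b then ⁅iA, Y⁆ else ⁅iL, Y⁆) ⁅iA, iL⁆} :
        Set (Matrix (Fin n) (Fin n) ℂ))
      = {X : Matrix (Fin n) (Fin n) ℂ | Xᴴ = -X ∧ X.trace = 0} := by
  change (LieAlgebra.bracketWordSpan ℝ iA iL : Set (Matrix (Fin n) (Fin n) ℂ)) = _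
  rw [LieAlgebra.bracketWordSpan_eq_span_lie_lieSpan, hgen, span_lie_skewHermitian_eq]
  rfl

/-- If A, L are real symmetric n×n matrices and the real Lie algebra generated by
iA and iL is u(n), then the span of all iterated brackets
ad_{iA}^{k₁} ad_{iL}^{k₂} ⋯ [iA,iL] equals su(n). -/
theorem stmt_3 (n : ℕ) (A L : Matrix (Fin n) (Fin n) ℝ)
    (hA : A.IsSymm) (hL : L.IsSymm)
    (iA : Matrix (Fin n) (Fin n) ℂ) (iL : Matrix (Fin n) (Fin n) ℂ)
    (hiA : iA = Complex.I • A.map Complex.ofReal)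
    (hiL : iL = Complex.I • L.map Complex.ofReal)
    (hgen : (LieSubalgebra.lieSpan ℝ (Matrix (Fin n) (Fin n) ℂ) {iA, iL} :
        Set (Matrix (Fin n) (Fin n) ℂ)) = {X | Xᴴ = -X}) :
    (Submodule.span ℝ
        {X : Matrix (Fin n) (Fin n) ℂ |
          ∃ w : List Bool,
            X = w.foldr (fun b Y => if b then ⁅iA, Y⁆ else ⁅iL, Y⁆) ⁅iA, iL⁆} :
        Set (Matrix (Fin n) (Fin n) ℂ))
      = {X : Matrix (Fin n) (Fin n) ℂ | Xᴴ = -X ∧ X.trace = 0} :=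
  stmt_3_general n iA iL hgen
end

section
/- Let A be a real symmetric n×n matrix and z ∈ ℝⁿ with rank [z, Az, …, A^{n−1}z] = n. Then the real Lie algebra generated by A and zzᵀ equals gl(n,ℝ). -/
/-!
Write `vᵢ = Aⁱ z`. For symmetric `A`, `⁅A, vᵢ vⱼᵀ⁆ = vᵢ₊₁ vⱼᵀ - vᵢ vⱼ₊₁ᵀ`, and
`⁅u zᵀ, z wᵀ⁆ = (z ⬝ᵥ z) u wᵀ - (w ⬝ᵥ u) z zᵀ`, so once `v₁ zᵀ` and `z v₁ᵀ` are in the Lie algebra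
generated by `A` and `z zᵀ`, induction puts every `vᵢ vⱼᵀ` there. Those two are recovered from
`⁅A, z zᵀ⁆ = v₁ zᵀ - z v₁ᵀ` and `⁅z zᵀ, ⁅A, z zᵀ⁆⁆ = 2 (z ⬝ᵥ v₁) z zᵀ - (z ⬝ᵥ z) (v₁ zᵀ + z v₁ᵀ)`.
Finally `vᵢ vⱼᵀ = W Eᵢⱼ Wᵀ` for the walk matrix `W`, and these span all matrices when `W` is
invertible.
-/

open Matrix

attribute [local instance] LieRing.ofAssociativeRing

namespace Matrix

variable {K ι : Type*} [Field K] [Fintype ι] [DecidableEq ι]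

theorem isUnit_of_rank_eq_card {W : Matrix ι ι K} (h : W.rank = Fintype.card ι) : IsUnit W := by
  rw [← linearIndependent_cols_iff_isUnit, linearIndependent_iff_card_eq_finrank_span, ← h,
    rank_eq_finrank_span_cols]
  rfl

theorem mul_single_one_mul_transpose (W : Matrix ι ι K) (i j : ι) :
    W * single i j 1 * Wᵀ = vecMulVec (W.col i) (W.col j) := by
  rw [single_eq_single_vecMulVec_single, mul_vecMulVec, vecMulVec_mul, mulVec_single_one,
    single_one_vecMul, row_transpose]

theorem span_vecMulVec_col_eq_top {W : Matrix ι ι K} (hW : IsUnit W) :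
    Submodule.span K (Set.range fun p : ι × ι => vecMulVec (W.col p.1) (W.col p.2)) = ⊤ := by
  have hdet : IsUnit W.det := (isUnit_iff_isUnit_det W).mp hW
  rw [eq_top_iff]
  rintro X -
  obtain ⟨C, rfl⟩ : ∃ C, W * C * Wᵀ = X :=
    ⟨W⁻¹ * (X * Wᵀ⁻¹), by
      rw [mul_nonsing_inv_cancel_left W _ hdet,
        nonsing_inv_mul_cancel_right Wᵀ _ (by rwa [det_transpose])]⟩
  induction C using Matrix.induction_on' with
  | h_zero => simp
  | h_add C D hC hD =>
    rw [Matrix.mul_add, Matrix.add_mul]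
    exact add_mem hC hD
  | h_std_basis i j x =>
    have hx : single i j x = x • single i j (1 : K) := by rw [smul_single, smul_eq_mul, mul_one]
    rw [hx, Matrix.mul_smul, Matrix.smul_mul, mul_single_one_mul_transpose]
    exact Submodule.smul_mem _ _ (Submodule.subset_span ⟨(i, j), rfl⟩)

theorem lie_vecMulVec (A : Matrix ι ι K) (u v : ι → K) :
    ⁅A, vecMulVec u v⁆ = vecMulVec (A *ᵥ u) v - vecMulVec u (v ᵥ* A) := by
  rw [Ring.lie_def, mul_vecMulVec, vecMulVec_mul]

theorem lie_vecMulVec_vecMulVec (a b c d : ι → K) :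
    ⁅vecMulVec a b, vecMulVec c d⁆ = (b ⬝ᵥ c) • vecMulVec a d - (d ⬝ᵥ a) • vecMulVec c b := by
  rw [Ring.lie_def, vecMulVec_mul_vecMulVec, vecMulVec_mul_vecMulVec, vecMulVec_smul,
    vecMulVec_smul]

theorem IsSymm.lie_vecMulVec {A : Matrix ι ι K} (hA : A.IsSymm) (u v : ι → K) :
    ⁅A, vecMulVec u v⁆ = vecMulVec (A *ᵥ u) v - vecMulVec u (A *ᵥ v) := by
  rw [Matrix.lie_vecMulVec, ← mulVec_transpose, hA.eq]

end Matrix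

namespace LieSubalgebra

variable {K ι : Type*} [Field K] [Fintype ι] [DecidableEq ι] {L : LieSubalgebra K (Matrix ι ι K)}
  {z : ι → K}

theorem vecMulVec_mem_of_mem_of_mem (hz : z ⬝ᵥ z ≠ 0) (hzz : vecMulVec z z ∈ L) {u w : ι → K}
    (hu : vecMulVec u z ∈ L) (hw : vecMulVec z w ∈ L) : vecMulVec u w ∈ L := by
  have hlie : (z ⬝ᵥ z) • vecMulVec u w
      = ⁅vecMulVec u z, vecMulVec z w⁆ + (w ⬝ᵥ u) • vecMulVec z z := by
    rw [lie_vecMulVec_vecMulVec, sub_add_cancel]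
  rw [← inv_smul_smul₀ hz (vecMulVec u w), hlie]
  exact L.smul_mem _ (L.add_mem (L.lie_mem hu hw) (L.smul_mem _ hzz))

theorem vecMulVec_mulVec_mem [NeZero (2 : K)] {A : Matrix ι ι K} (hA : A.IsSymm) (hAL : A ∈ L)
    (hz : z ⬝ᵥ z ≠ 0) (hzz : vecMulVec z z ∈ L) :
    vecMulVec (A *ᵥ z) z ∈ L ∧ vecMulVec z (A *ᵥ z) ∈ L := by
  have hD : vecMulVec (A *ᵥ z) z - vecMulVec z (A *ᵥ z) ∈ L := by
    rw [← hA.lie_vecMulVec]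
    exact L.lie_mem hAL hzz
  have hlie : ⁅vecMulVec z z, vecMulVec (A *ᵥ z) z - vecMulVec z (A *ᵥ z)⁆
      = (2 * (z ⬝ᵥ (A *ᵥ z))) • vecMulVec z z
        - (z ⬝ᵥ z) • (vecMulVec (A *ᵥ z) z + vecMulVec z (A *ᵥ z)) := by
    rw [lie_sub, lie_vecMulVec_vecMulVec, lie_vecMulVec_vecMulVec, dotProduct_comm (A *ᵥ z) z]
    module
  have hS : vecMulVec (A *ᵥ z) z + vecMulVec z (A *ᵥ z) ∈ L := by
    have h := L.sub_mem (L.smul_mem (2 * (z ⬝ᵥ (A *ᵥ z))) hzz) (L.lie_mem hzz hD)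
    rw [hlie, sub_sub_cancel] at h
    simpa [hz] using L.smul_mem (z ⬝ᵥ z)⁻¹ h
  constructor
  · simpa [smul_add, ← two_smul K, smul_smul, two_ne_zero]
      using L.smul_mem (2⁻¹ : K) (L.add_mem hS hD)
  · simpa [smul_sub, ← two_smul K, smul_smul, two_ne_zero]
      using L.smul_mem (2⁻¹ : K) (L.sub_mem hS hD)

theorem vecMulVec_pow_mulVec_mem [NeZero (2 : K)] {A : Matrix ι ι K} (hA : A.IsSymm)
    (hAL : A ∈ L) (hz : z ⬝ᵥ z ≠ 0) (hzz : vecMulVec z z ∈ L) (i j : ℕ) :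
    vecMulVec (A ^ i *ᵥ z) (A ^ j *ᵥ z) ∈ L := by
  have hAz := vecMulVec_mulVec_mem hA hAL hz hzz
  have hpow : ∀ m, vecMulVec (A ^ m *ᵥ z) z ∈ L ∧ vecMulVec z (A ^ m *ᵥ z) ∈ L := by
    intro m
    induction m with
    | zero => simpa only [pow_zero, one_mulVec, and_self] using hzz
    | succ m ih =>
      have hsucc : A ^ (m + 1) *ᵥ z = A *ᵥ (A ^ m *ᵥ z) := by rw [mulVec_mulVec, pow_succ']
      have h₁ := L.lie_mem hAL ih.1
      have h₂ := L.lie_mem hAL ih.2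
      rw [hA.lie_vecMulVec] at h₁ h₂
      rw [hsucc]
      constructor
      · simpa only [sub_add_cancel]
          using L.add_mem h₁ (vecMulVec_mem_of_mem_of_mem hz hzz ih.1 hAz.2)
      · simpa only [sub_sub_cancel]
          using L.sub_mem (vecMulVec_mem_of_mem_of_mem hz hzz hAz.1 ih.2) h₂
  exact vecMulVec_mem_of_mem_of_mem hz hzz (hpow i).1 (hpow j).2

end LieSubalgebra

/-- If the walk matrix [z, Az, …, A^{n−1}z] of a real symmetric A has rank n,
then the real Lie algebra generated by A and zzᵀ equals gl(n,ℝ). -/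
theorem stmt_5 (n : ℕ) (A : Matrix (Fin n) (Fin n) ℝ) (hA : A.IsSymm) (z : Fin n → ℝ)
    (hW : (Matrix.of fun i j : Fin n => ((A ^ (j : ℕ)) *ᵥ z) i).rank = n) :
    LieSubalgebra.lieSpan ℝ (Matrix (Fin n) (Fin n) ℝ) {A, vecMulVec z z} = ⊤ := by
  have hW' : IsUnit _ := isUnit_of_rank_eq_card (hW.trans (Fintype.card_fin n).symm)
  have hmem (i j : ℕ) :
      vecMulVec (A ^ i *ᵥ z) (A ^ j *ᵥ z) ∈
        LieSubalgebra.lieSpan ℝ (Matrix (Fin n) (Fin n) ℝ) {A, vecMulVec z z} := by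
    rcases eq_or_ne z 0 with rfl | hz
    · simp
    · exact LieSubalgebra.vecMulVec_pow_mulVec_mem hA (LieSubalgebra.subset_lieSpan (by simp))
        (dotProduct_self_eq_zero.not.mpr hz) (LieSubalgebra.subset_lieSpan (by simp)) i j
  rw [← LieSubalgebra.toSubmodule_eq_top, eq_top_iff, ← span_vecMulVec_col_eq_top hW',
    Submodule.span_le]
  rintro _ ⟨⟨i, j⟩, rfl⟩
  exact hmem i j
end

section
/- Let A be a real symmetric n×n matrix such that the graph G(A) of A is connected and all nonzero off-diagonal entries of A have the same sign. If k ≠ j are vertices at graph distance d = d(k,j) in G(A), then the (k,j) entry of A^d is nonzero. -/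
/-!
Let the off-diagonal support of `A` lie in the edge set of `G`. Expanding `(A ^ (m + 1)) k i` as
`∑ t, A k t * (A ^ m) t i`, only `t = k` and neighbours `t` of `k` contribute, and those are at
distance at least `d(k, i) - 1` from `i`; so by induction `(A ^ m) k i = 0` whenever `m < d(k, i)`.
If moreover every edge carries a positive entry, then at `m + 1 = d(k, i)` the surviving terms are
products of a positive edge weight with an entry `(A ^ m) t i`, `d(t, i) = m`, positive by
induction, and at least one such `t` exists, the second vertex of a geodesic. A matrix whose edges
carry negative entries is handled by passing to `-A`.
-/

namespace SimpleGraph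

variable {V : Type*} {G : SimpleGraph V} {k t : V}

theorem Adj.edist_le_edist_add_one (h : G.Adj k t) (i : V) : G.edist k i ≤ G.edist t i + 1 :=
  calc G.edist k i ≤ G.edist k t + G.edist t i := SimpleGraph.edist_triangle
    _ = G.edist t i + 1 := by rw [edist_eq_one_iff_adj.mpr h, add_comm]

theorem Adj.lt_edist_of_add_one_lt_edist (h : G.Adj k t) {i : V} {m : ℕ∞}
    (hm : m + 1 < G.edist k i) : m < G.edist t i :=
  (ENat.add_lt_add_iff_right ENat.one_ne_top).mp (hm.trans_le (h.edist_le_edist_add_one i))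

theorem Adj.le_edist_of_add_one_le_edist (h : G.Adj k t) {i : V} {m : ℕ∞}
    (hm : m + 1 ≤ G.edist k i) : m ≤ G.edist t i :=
  (ENat.add_le_add_iff_right ENat.one_ne_top).mp (hm.trans (h.edist_le_edist_add_one i))

end SimpleGraph

namespace Matrix

variable {V R : Type*} [Fintype V] [DecidableEq V] {G : SimpleGraph V} {A : Matrix V V R}

theorem pow_apply_eq_zero_of_lt_edist [Semiring R]
    (hsupp : ∀ i j, i ≠ j → A i j ≠ 0 → G.Adj i j) {m : ℕ} {k i : V}
    (hm : (m : ℕ∞) < G.edist k i) : (A ^ m) k i = 0 := by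
  induction m generalizing k with
  | zero =>
    have hki : k ≠ i := fun h => by simp [h] at hm
    simp [one_apply_ne hki]
  | succ m ih =>
    rw [pow_succ', mul_apply]
    refine Finset.sum_eq_zero fun t _ => ?_
    by_cases htk : t = k
    · subst htk
      rw [ih (lt_of_le_of_lt (by norm_cast; omega) hm), mul_zero]
    by_cases hA : A k t = 0
    · rw [hA, zero_mul]
    have hkt := hsupp k t (Ne.symm htk) hA
    rw [ih (hkt.lt_edist_of_add_one_lt_edist (by exact_mod_cast hm)), mul_zero]

theorem pow_apply_pos_of_edist_eq [Semiring R] [PartialOrder R] [IsStrictOrderedRing R]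
    (hsupp : ∀ i j, i ≠ j → A i j ≠ 0 → G.Adj i j) (hpos : ∀ i j, G.Adj i j → 0 < A i j)
    {m : ℕ} {k i : V} (hm : G.edist k i = m) : 0 < (A ^ m) k i := by
  induction m generalizing k with
  | zero => simp [SimpleGraph.edist_eq_zero_iff.mp hm]
  | succ m ih =>
    have hnonneg : ∀ t, m ≤ G.edist t i → 0 ≤ (A ^ m) t i := fun t ht =>
      ht.eq_or_lt.elim (fun h => (ih h.symm).le)
        (fun h => (pow_apply_eq_zero_of_lt_edist hsupp h).ge)
    obtain ⟨p, hp⟩ := SimpleGraph.exists_walk_of_edist_eq_coe hm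
    cases p with
    | nil => simp at hp
    | @cons _ t _ hkt q =>
      have hq : G.edist t i = m := by
        rw [SimpleGraph.Walk.length_cons, Nat.add_right_cancel_iff] at hp
        exact le_antisymm (hp ▸ SimpleGraph.edist_le q)
          (hkt.le_edist_of_add_one_le_edist (by exact_mod_cast hm.ge))
      rw [pow_succ', mul_apply]
      refine Finset.sum_pos' (fun s _ => ?_) ⟨t, Finset.mem_univ t, mul_pos (hpos k t hkt) (ih hq)⟩
      by_cases hsk : s = k
      · subst hsk
        rw [pow_apply_eq_zero_of_lt_edist hsupp (by rw [hm]; norm_cast; omega), mul_zero]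
      by_cases hA : A k s = 0
      · rw [hA, zero_mul]
      have hks := hsupp k s (Ne.symm hsk) hA
      exact mul_nonneg (hpos k s hks).le
        (hnonneg s (hks.le_edist_of_add_one_le_edist (by exact_mod_cast hm.ge)))

theorem pow_apply_ne_zero_of_edist_eq [Ring R] [PartialOrder R] [IsStrictOrderedRing R]
    (hsupp : ∀ i j, i ≠ j → A i j ≠ 0 → G.Adj i j)
    (hsign : (∀ i j, G.Adj i j → 0 < A i j) ∨ (∀ i j, G.Adj i j → A i j < 0))
    {m : ℕ} {k i : V} (hm : G.edist k i = m) : (A ^ m) k i ≠ 0 := by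
  rcases hsign with hpos | hneg
  · exact (pow_apply_pos_of_edist_eq hsupp hpos hm).ne'
  · have h := pow_apply_pos_of_edist_eq (A := -A)
      (fun i j hij hA => hsupp i j hij (by simpa using hA))
      (fun i j hij => neg_pos.mpr (hneg i j hij)) hm
    rcases m.even_or_odd with he | ho
    · rw [he.neg_pow] at h
      exact h.ne'
    · rw [ho.neg_pow, neg_apply, neg_pos] at h
      exact h.ne

end Matrix

theorem stmt_9_general (n : ℕ) (A : Matrix (Fin n) (Fin n) ℝ)
    (G : SimpleGraph (Fin n)) (hG : ∀ i j, G.Adj i j ↔ i ≠ j ∧ A i j ≠ 0)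
    (hconn : G.Connected)
    (hsign : (∀ i j, i ≠ j → 0 ≤ A i j) ∨ (∀ i j, i ≠ j → A i j ≤ 0))
    (k j : Fin n) :
    (A ^ (G.dist k j)) k j ≠ 0 := by
  have hsupp : ∀ i j, i ≠ j → A i j ≠ 0 → G.Adj i j := fun i j hij hA => (hG i j).mpr ⟨hij, hA⟩
  have hsign' : (∀ i j, G.Adj i j → 0 < A i j) ∨ (∀ i j, G.Adj i j → A i j < 0) := by
    refine hsign.imp (fun hpos i j hij => ?_) (fun hneg i j hij => ?_) <;>
      obtain ⟨hne, hA⟩ := (hG i j).mp hij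
    exacts [(hpos i j hne).lt_of_ne' hA, (hneg i j hne).lt_of_ne hA]
  exact Matrix.pow_apply_ne_zero_of_edist_eq hsupp hsign' (hconn k j).coe_dist_eq_edist.symm

/-- If G(A) is connected and all nonzero off-diagonal entries of the real
symmetric matrix A have the same sign, and k ≠ j are at distance d in G(A), then
(A^d)_{kj} ≠ 0. -/
theorem stmt_9 (n : ℕ) (A : Matrix (Fin n) (Fin n) ℝ) (hA : A.IsSymm)
    (G : SimpleGraph (Fin n)) (hG : ∀ i j, G.Adj i j ↔ i ≠ j ∧ A i j ≠ 0)
    (hconn : G.Connected)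
    (hsign : (∀ i j, i ≠ j → 0 ≤ A i j) ∨ (∀ i j, i ≠ j → A i j ≤ 0))
    (k j : Fin n) (hkj : k ≠ j) :
    (A ^ (G.dist k j)) k j ≠ 0 :=
  stmt_9_general n A G hG hconn hsign k j
end

section
/- Let A be a real symmetric n×n matrix whose graph G(A) is connected with all nonzero off-diagonal entries of A of the same sign, let S ⊆ {1,…,n}, and let Z = {e_j : j ∈ S} be the corresponding standard basis vectors. Then span P(A,Z) ⊆ L(A,Z), where L(A,Z) is the real Lie algebra generated by A together with the matrices e_j e_jᵀ for j ∈ S, and P(A,Z) = { A^m e_k e_jᵀ A^ℓ : k,j ∈ S, 0 ≤ m,ℓ ≤ n−1 }. -/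
open Matrix

attribute [local instance 100] LieRing.ofAssociativeRing

/-!
The Lie algebra `L` generated by `A` and the diagonal units `E_jj = e_j e_jᵀ` (`j ∈ S`)
contains `A E_jj` and `E_jj A` (from `⁅E_jj, ⁅A, E_jj⁆⁆` and `⁅A, E_jj⁆`), and then every
`A^m E_jj` and `E_jj A^m`, because `⁅M E_kj, E_jj N⁆ ≡ M E_kj N` modulo `E_jj`. For `k ≠ j` in
`S` one has `⁅E_kk A^d, E_jj⁆ = (A^d)_kj E_kj`; taking `d` to be the graph distance from `k` to
`j`, only shortest walks contribute to `(A^d)_kj`, and they use only off-diagonal entries, all of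
one sign, so `(A^d)_kj ≠ 0` and `E_kj ∈ L`. The same bracket trick then moves powers of `A` onto
both sides of `E_kj`.
-/

namespace SimpleGraph

variable {V : Type*} {G : SimpleGraph V}

theorem exists_adj_dist_eq_of_dist_eq_succ {u v : V} {d : ℕ}
    (h : G.dist u v = d + 1) : ∃ x, G.Adj x v ∧ G.dist u x = d := by
  obtain ⟨p, hp⟩ := exists_walk_of_dist_ne_zero (by omega : G.dist u v ≠ 0)
  cases hrev : p.reverse with
  | nil =>
    have := p.length_reverse
    rw [hrev, Walk.length_nil] at this
    omega
  | cons hadj q =>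
    have hq : q.length = d := by
      have := p.length_reverse
      rw [hrev, Walk.length_cons] at this
      omega
    refine ⟨_, hadj.symm, le_antisymm ?_ ?_⟩
    · exact dist_comm ▸ hq ▸ dist_le q
    · have := hadj.symm.reachable.dist_triangle_right u
      rw [dist_eq_one_iff_adj.mpr hadj.symm] at this
      omega

end SimpleGraph

section MatrixPowers

variable {ι R : Type*} [Fintype ι] [DecidableEq ι] {G : SimpleGraph ι}

theorem Matrix.exists_walk_length_le_of_pow_apply_ne_zero [Semiring R]
    {A : Matrix ι ι R} (hG : ∀ i j, i ≠ j → A i j ≠ 0 → G.Adj i j) {m : ℕ} {k j : ι}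
    (h : (A ^ m) k j ≠ 0) : ∃ p : G.Walk k j, p.length ≤ m := by
  induction m generalizing j with
  | zero =>
    obtain rfl : k = j := by by_contra hkj; simp [one_apply_ne hkj] at h
    exact ⟨.nil, le_rfl⟩
  | succ m ih =>
    rw [pow_succ, mul_apply] at h
    obtain ⟨i, -, hi⟩ := Finset.exists_ne_zero_of_sum_ne_zero h
    obtain ⟨p, hp⟩ := ih (left_ne_zero_of_mul hi)
    by_cases hij : i = j
    · subst hij; exact ⟨p, by omega⟩
    · refine ⟨p.concat (hG i j hij (right_ne_zero_of_mul hi)), ?_⟩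
      rw [SimpleGraph.Walk.length_concat]; omega

theorem Matrix.pow_apply_eq_zero_of_lt_dist [Semiring R] {A : Matrix ι ι R}
    (hG : ∀ i j, i ≠ j → A i j ≠ 0 → G.Adj i j) {m : ℕ} {k j : ι} (h : m < G.dist k j) :
    (A ^ m) k j = 0 := by
  by_contra hne
  obtain ⟨p, hp⟩ := exists_walk_length_le_of_pow_apply_ne_zero hG hne
  exact absurd (SimpleGraph.dist_le p) (by omega)

variable [Ring R] [LinearOrder R] [IsStrictOrderedRing R]

-- Every nonzero term of `(A ^ (d + 1)) k j = ∑ i, (A ^ d) k i * A i j` comes from an `i ≠ j`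
-- adjacent to `j` at distance `d` from `k`, so it is positive by induction.
theorem Matrix.pow_dist_apply_pos {A : Matrix ι ι R}
    (hG : ∀ i j, G.Adj i j ↔ i ≠ j ∧ A i j ≠ 0) (hA : ∀ i j, i ≠ j → 0 ≤ A i j)
    {k j : ι} (hkj : G.Reachable k j) : 0 < (A ^ G.dist k j) k j := by
  have hG' : ∀ i j, i ≠ j → A i j ≠ 0 → G.Adj i j := fun i j hij hA =>
    (hG i j).2 ⟨hij, hA⟩
  generalize hd : G.dist k j = d
  induction d generalizing j with
  | zero => simp [hkj.dist_eq_zero_iff.mp hd]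
  | succ d ih =>
    have pos_of_adj : ∀ i, G.Adj i j → G.dist k i = d → 0 < (A ^ d) k i * A i j :=
      fun i hij hki => mul_pos (ih (hkj.trans hij.symm.reachable) hki)
        (lt_of_le_of_ne (hA i j hij.ne) ((hG i j).1 hij).2.symm)
    rw [pow_succ, mul_apply]
    obtain ⟨x, hxj, hkx⟩ := SimpleGraph.exists_adj_dist_eq_of_dist_eq_succ hd
    refine Finset.sum_pos' (fun i _ => ?_) ⟨x, Finset.mem_univ x, pos_of_adj x hxj hkx⟩
    by_cases hterm : (A ^ d) k i * A i j = 0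
    · exact hterm.ge
    have hki : G.dist k i ≤ d := not_lt.mp fun hlt =>
      left_ne_zero_of_mul hterm (pow_apply_eq_zero_of_lt_dist hG' hlt)
    have hij : i ≠ j := by rintro rfl; omega
    have hadj := hG' i j hij (right_ne_zero_of_mul hterm)
    have := hadj.reachable.dist_triangle_right k
    rw [SimpleGraph.dist_eq_one_iff_adj.mpr hadj] at this
    exact (pos_of_adj i hadj (by omega)).le

theorem Matrix.pow_dist_apply_ne_zero {A : Matrix ι ι R}
    (hG : ∀ i j, G.Adj i j ↔ i ≠ j ∧ A i j ≠ 0)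
    (hsign : (∀ i j, i ≠ j → 0 ≤ A i j) ∨ (∀ i j, i ≠ j → A i j ≤ 0))
    {k j : ι} (hkj : G.Reachable k j) : (A ^ G.dist k j) k j ≠ 0 := by
  rcases hsign with hA | hA
  · exact (pow_dist_apply_pos hG hA hkj).ne'
  · have hpos := pow_dist_apply_pos (A := -A) (by simpa using hG)
      (fun i j hij => by simpa using hA i j hij) hkj
    rcases (G.dist k j).even_or_odd with heven | hodd
    · rw [heven.neg_pow] at hpos
      exact hpos.ne'
    · rw [hodd.neg_pow, neg_apply] at hpos
      exact (neg_pos.mp hpos).ne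

end MatrixPowers

section LieSubalgebra

variable {ι R : Type*} [Fintype ι] [DecidableEq ι] [CommRing R]

theorem Matrix.lie_mul_single_single_mul (M N : Matrix ι ι R) (k j : ι) :
    ⁅M * single k j 1, single j j (1 : R) * N⁆ =
      M * single k j 1 * N - (N * M) j k • single j j 1 := by
  have hEE : single k j (1 : R) * single j j 1 = single k j 1 := by simp
  have hENME : single j j 1 * N * (M * single k j 1) = single j j 1 * (N * M) * single k j 1 := by
    noncomm_ring
  rw [Ring.lie_def, hENME, single_mul_mul_single, ← mul_assoc, mul_assoc M, hEE]
  simp [smul_single]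

theorem Matrix.lie_single_lie_single (A : Matrix ι ι R) (j : ι) :
    ⁅single j j (1 : R), ⁅A, single j j 1⁆⁆ =
      (2 * A j j) • single j j 1 - (A * single j j 1 + single j j 1 * A) := by
  have hEAE : single j j (1 : R) * A * single j j 1 = A j j • single j j 1 := by
    simp [smul_single]
  have hEE : single j j (1 : R) * single j j 1 = single j j 1 := by simp
  have hAEE : A * single j j 1 * single j j 1 = A * single j j 1 := by rw [mul_assoc, hEE]
  simp only [Ring.lie_def, mul_sub, sub_mul, ← mul_assoc, hEAE, hEE, hAEE]
  module

theorem Matrix.lie_single_mul_single (M : Matrix ι ι R) {k j : ι} (hkj : k ≠ j) :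
    ⁅single k k 1 * M, single j j (1 : R)⁆ = M k j • single k j 1 := by
  rw [Ring.lie_def, single_mul_mul_single, ← mul_assoc, single_mul_single_of_ne (h := hkj.symm)]
  simp [smul_single]

variable {L : LieSubalgebra R (Matrix ι ι R)} {A : Matrix ι ι R}

theorem LieSubalgebra.mul_single_mul_mem {M N : Matrix ι ι R} {k j : ι}
    (hM : M * single k j 1 ∈ L) (hN : single j j 1 * N ∈ L) (hj : single j j 1 ∈ L) :
    M * single k j 1 * N ∈ L := by
  have := L.add_mem (L.lie_mem hM hN) (L.smul_mem ((N * M) j k) hj)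
  rwa [lie_mul_single_single_mul, sub_add_cancel] at this

theorem LieSubalgebra.mul_single_mem_and_single_mul_mem [Invertible (2 : R)] (hA : A ∈ L)
    {j : ι} (hj : single j j 1 ∈ L) : A * single j j 1 ∈ L ∧ single j j 1 * A ∈ L := by
  have hsum : A * single j j 1 + single j j 1 * A ∈ L := by
    have := L.sub_mem (L.smul_mem (2 * A j j) hj) (L.lie_mem hj (L.lie_mem hA hj))
    rwa [lie_single_lie_single, sub_sub_cancel] at this
  have hdiff : A * single j j 1 - single j j 1 * A ∈ L := by
    simpa only [Ring.lie_def] using L.lie_mem hA hj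
  have half : ∀ X : Matrix ι ι R, (2 : R) • X ∈ L → X ∈ L := fun X hX => by
    simpa [smul_smul] using L.smul_mem (⅟2 : R) hX
  constructor
  · exact half _ (by simpa [two_smul] using L.add_mem hsum hdiff)
  · exact half _ (by simpa [two_smul] using L.sub_mem hsum hdiff)

variable [Invertible (2 : R)]

theorem LieSubalgebra.pow_mul_single_mem (hA : A ∈ L) {j : ι} (hj : single j j 1 ∈ L)
    (m : ℕ) :
    A ^ m * single j j 1 ∈ L := by
  induction m with
  | zero => simpa using hj
  | succ m ih =>
    have hsplit : A ^ (m + 1) * single j j 1 =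
        ⁅A, A ^ m * single j j 1⁆ + A ^ m * single j j 1 * A := by
      rw [Ring.lie_def, pow_succ']
      noncomm_ring
    rw [hsplit]
    exact L.add_mem (L.lie_mem hA ih)
      (mul_single_mul_mem ih (mul_single_mem_and_single_mul_mem hA hj).2 hj)

theorem LieSubalgebra.single_mul_pow_mem (hA : A ∈ L) {j : ι} (hj : single j j 1 ∈ L)
    (m : ℕ) :
    single j j 1 * A ^ m ∈ L := by
  induction m with
  | zero => simpa using hj
  | succ m ih =>
    have hsplit : single j j 1 * A ^ (m + 1) =
        A * single j j 1 * A ^ m - ⁅A, single j j 1 * A ^ m⁆ := by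
      rw [Ring.lie_def, pow_succ]
      noncomm_ring
    rw [hsplit]
    exact L.sub_mem (mul_single_mul_mem (mul_single_mem_and_single_mul_mem hA hj).1 ih hj)
      (L.lie_mem hA ih)

theorem LieSubalgebra.single_mem_of_isUnit (hA : A ∈ L) {k j : ι} (hk : single k k 1 ∈ L)
    (hj : single j j 1 ∈ L) (hkj : k ≠ j) {m : ℕ} (hu : IsUnit ((A ^ m) k j)) :
    single k j 1 ∈ L := by
  obtain ⟨u, hu⟩ := hu
  have h := L.smul_mem (↑u⁻¹ : R) (L.lie_mem (single_mul_pow_mem hA hk m) hj)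
  rwa [lie_single_mul_single _ hkj, smul_smul, ← hu, Units.inv_mul, one_smul] at h

theorem LieSubalgebra.pow_mul_single_mul_pow_mem (hA : A ∈ L) {k j : ι}
    (hk : single k k 1 ∈ L) (hj : single j j 1 ∈ L) (hkj : single k j 1 ∈ L) (m ℓ : ℕ) :
    A ^ m * single k j 1 * A ^ ℓ ∈ L := by
  have hleft : A ^ m * single k j 1 ∈ L := by
    simpa [mul_assoc] using mul_single_mul_mem (N := single k j 1)
      (pow_mul_single_mem hA hk m) (by simpa using hkj) hk
  exact mul_single_mul_mem hleft (single_mul_pow_mem hA hj ℓ) hj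

end LieSubalgebra

theorem stmt_10_general (n : ℕ) (A : Matrix (Fin n) (Fin n) ℝ)
    (G : SimpleGraph (Fin n)) (hG : ∀ i j, G.Adj i j ↔ i ≠ j ∧ A i j ≠ 0)
    (hconn : G.Connected)
    (hsign : (∀ i j, i ≠ j → 0 ≤ A i j) ∨ (∀ i j, i ≠ j → A i j ≤ 0))
    (S : Set (Fin n)) :
    (Submodule.span ℝ
        {M : Matrix (Fin n) (Fin n) ℝ | ∃ k ∈ S, ∃ j ∈ S, ∃ m ℓ : Fin n,
          M = A ^ (m : ℕ) * vecMulVec (Pi.single k 1) (Pi.single j 1) * A ^ (ℓ : ℕ)} :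
        Set (Matrix (Fin n) (Fin n) ℝ)) ⊆
    (LieSubalgebra.lieSpan ℝ (Matrix (Fin n) (Fin n) ℝ)
        ({A} ∪ {M | ∃ j ∈ S, M = vecMulVec (Pi.single j 1) (Pi.single j 1)}) :
        Set (Matrix (Fin n) (Fin n) ℝ)) := by
  set L := LieSubalgebra.lieSpan ℝ (Matrix (Fin n) (Fin n) ℝ)
    ({A} ∪ {M | ∃ j ∈ S, M = vecMulVec (Pi.single j 1) (Pi.single j 1)})
  have hA : A ∈ L := LieSubalgebra.subset_lieSpan (Set.mem_union_left _ rfl)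
  have hdiag : ∀ j ∈ S, single j j (1 : ℝ) ∈ L := fun j hj =>
    LieSubalgebra.subset_lieSpan
      (Set.mem_union_right _ ⟨j, hj, single_eq_single_vecMulVec_single j j⟩)
  have hoffdiag : ∀ k ∈ S, ∀ j ∈ S, single k j (1 : ℝ) ∈ L := fun k hk j hj => by
    rcases eq_or_ne k j with rfl | hkj
    · exact hdiag k hk
    · exact L.single_mem_of_isUnit hA (hdiag k hk) (hdiag j hj) hkj
        (isUnit_iff_ne_zero.mpr (pow_dist_apply_ne_zero hG hsign (hconn k j)))
  refine Submodule.span_le (p := L.toSubmodule) |>.mpr ?_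
  rintro _ ⟨k, hk, j, hj, m, ℓ, rfl⟩
  rw [← single_eq_single_vecMulVec_single]
  exact L.pow_mul_single_mul_pow_mem hA (hdiag k hk) (hdiag j hj) (hoffdiag k hk j hj) m ℓ

/-- If G(A) is connected with same-sign nonzero off-diagonal entries and
Z = {e_j : j ∈ S}, then span P(A,Z) ⊆ L(A,Z), the Lie algebra generated by A and the
e_j e_jᵀ, j ∈ S. -/
theorem stmt_10 (n : ℕ) (A : Matrix (Fin n) (Fin n) ℝ) (hA : A.IsSymm)
    (G : SimpleGraph (Fin n)) (hG : ∀ i j, G.Adj i j ↔ i ≠ j ∧ A i j ≠ 0)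
    (hconn : G.Connected)
    (hsign : (∀ i j, i ≠ j → 0 ≤ A i j) ∨ (∀ i j, i ≠ j → A i j ≤ 0))
    (S : Set (Fin n)) :
    (Submodule.span ℝ
        {M : Matrix (Fin n) (Fin n) ℝ | ∃ k ∈ S, ∃ j ∈ S, ∃ m ℓ : Fin n,
          M = A ^ (m : ℕ) * vecMulVec (Pi.single k 1) (Pi.single j 1) * A ^ (ℓ : ℕ)} :
        Set (Matrix (Fin n) (Fin n) ℝ)) ⊆
    (LieSubalgebra.lieSpan ℝ (Matrix (Fin n) (Fin n) ℝ)
        ({A} ∪ {M | ∃ j ∈ S, M = vecMulVec (Pi.single j 1) (Pi.single j 1)}) :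
        Set (Matrix (Fin n) (Fin n) ℝ)) :=
  stmt_10_general n A G hG hconn hsign S
end

section
/- Let A be a real symmetric n×n matrix whose graph G(A) is connected, with all nonzero off-diagonal entries of A having the same sign, and let S ⊆ {1,…,n} be a zero forcing set of G(A). Then the real Lie algebra generated by A together with {e_j e_jᵀ : j ∈ S} equals gl(n,ℝ). -/
open Matrix

attribute [local instance 100] LieRing.ofAssociativeRing

/-- Vertices that eventually become black in the zero forcing process started from `S`:
a vertex is black if it is in `S`, or if it has a black neighbor `u` all of whose other
neighbors are already black (the color change rule). -/
inductive ZeroForces {V : Type*} (G : SimpleGraph V) (S : Set V) : V → Prop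
  | init : ∀ v ∈ S, ZeroForces G S v
  | force : ∀ u w, ZeroForces G S u → G.Adj u w →
      (∀ x, G.Adj u x → x ≠ w → ZeroForces G S x) → ZeroForces G S w

/-- `S` is a zero forcing set of `G` if the process turns all vertices black. -/
def IsZeroForcingSet {V : Type*} (G : SimpleGraph V) (S : Set V) : Prop :=
  ∀ v, ZeroForces G S v

/-!
Write `E i j` for the matrix unit `single i j 1` and `B = ⁅E u u, A⁆`. For `x ≠ u`,
`⁅E x x, B⁆ = -A x u • (E x u + E u x)`, which vanishes unless `x` is a neighbour of `u`, while
`∑ x, ⁅E x x, B⁆ = ⁅1, B⁆ = 0`. So when `u` forces `w`, i.e. `E u u` and `E x x` for all other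
neighbours `x` of `u` are in the Lie algebra, so is `⁅E w w, B⁆ = -∑_{x ≠ w} ⁅E x x, B⁆`, hence
`E u w + E w u`. Bracketing with `E u u` gives `E u w - E w u`, which separates `E u w` and
`E w u` (dividing by 2), and `⁅E w u, E u w⁆ = E w w - E u u` gives `E w w`. Thus every `E v v`
lies in the algebra; the same computation then yields `E u w` along every edge, and brackets
`⁅E u v, E v w⁆ = E u w` along paths of the connected graph yield every matrix unit.
-/

namespace Matrix

variable {ι R : Type*} [Fintype ι] [DecidableEq ι] [CommRing R]

theorem lie_single_lie_single_of_ne (A : Matrix ι ι R) {x u : ι} (hxu : x ≠ u) :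
    ⁅single x x (1 : R), ⁅single u u (1 : R), A⁆⁆
      = -(single x u (A x u) + single u x (A u x)) := by
  have hxu' : single x x (1 : R) * single u u 1 = 0 := single_mul_single_of_ne _ _ _ _ hxu _
  have hux' : single u u (1 : R) * single x x 1 = 0 := single_mul_single_of_ne _ _ _ _ hxu.symm _
  simp only [Ring.lie_def, mul_sub, sub_mul, ← mul_assoc, hxu', single_mul_mul_single, zero_mul,
    one_mul, mul_one]
  rw [mul_assoc A, hux', mul_zero]
  abel

theorem sum_lie_single_one (B : Matrix ι ι R) : ∑ x : ι, ⁅single x x (1 : R), B⁆ = 0 := by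
  rw [← sum_lie (Finset.univ : Finset ι) (fun x => single x x (1 : R)), sum_single_one,
    Ring.lie_def, one_mul, mul_one, sub_self]

theorem _root_.LieSubalgebra.eq_top_of_single_mem {L : LieSubalgebra R (Matrix ι ι R)}
    (h : ∀ i j, single i j (1 : R) ∈ L) : L = ⊤ := by
  rw [← LieSubalgebra.toSubmodule_eq_top, eq_top_iff, ← (stdBasis R ι ι).span_eq,
    Submodule.span_le]
  rintro _ ⟨⟨i, j⟩, rfl⟩
  rw [stdBasis_eq_single]
  exact h i j

end Matrix

namespace LieSubalgebra

open Matrix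

variable {ι K : Type*} [Fintype ι] [DecidableEq ι] [Field K]
  {L : LieSubalgebra K (Matrix ι ι K)}

theorem single_mem_of_single_add_single_mem [NeZero (2 : K)] {u w : ι} (huw : u ≠ w)
    (hu : single u u (1 : K) ∈ L) (h : single u w (1 : K) + single w u 1 ∈ L) :
    single u w (1 : K) ∈ L ∧ single w u (1 : K) ∈ L := by
  have hsub : single u w (1 : K) - single w u 1 ∈ L := by
    have := L.lie_mem hu h
    simpa [Ring.lie_def, mul_add, add_mul, single_mul_single_of_ne _ _ _ _ huw,
      single_mul_single_of_ne _ _ _ _ huw.symm] using this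
  have huw_mem : single u w (1 : K) ∈ L := by
    convert L.smul_mem (2⁻¹ : K) (L.add_mem h hsub) using 1
    rw [add_add_sub_cancel, ← two_smul K, smul_smul, inv_mul_cancel₀ two_ne_zero, one_smul]
  exact ⟨huw_mem, by simpa using L.sub_mem h huw_mem⟩

theorem single_diag_mem_of_single_mem {u w : ι} (hu : single u u (1 : K) ∈ L)
    (huw : single u w (1 : K) ∈ L) (hwu : single w u (1 : K) ∈ L) :
    single w w (1 : K) ∈ L := by
  have := L.add_mem (L.lie_mem hwu huw) hu
  simpa [Ring.lie_def] using this

variable {A : Matrix ι ι K}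

theorem single_add_single_mem_of_lie_lie_mem (hA : A.IsSymm) {u w : ι} (huw : u ≠ w)
    (hAuw : A u w ≠ 0) (h : ⁅single w w (1 : K), ⁅single u u (1 : K), A⁆⁆ ∈ L) :
    single u w (1 : K) + single w u 1 ∈ L := by
  rw [lie_single_lie_single_of_ne A huw.symm, ← hA.apply w u] at h
  convert L.smul_mem (-(A u w)⁻¹) h using 1
  rw [smul_neg, neg_smul, neg_neg, smul_add, smul_single, smul_single, smul_eq_mul,
    inv_mul_cancel₀ hAuw, add_comm]

theorem lie_lie_mem_of_forall_neighbor (hA : A.IsSymm) (hAL : A ∈ L) {u w : ι}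
    (hu : single u u (1 : K) ∈ L)
    (hnbr : ∀ x, x ≠ u → x ≠ w → A x u ≠ 0 → single x x (1 : K) ∈ L) :
    ⁅single w w (1 : K), ⁅single u u (1 : K), A⁆⁆ ∈ L := by
  set B := ⁅single u u (1 : K), A⁆
  have hsum : ⁅single w w (1 : K), B⁆
      = -∑ x ∈ Finset.univ.erase w, ⁅single x x (1 : K), B⁆ := by
    rw [eq_neg_iff_add_eq_zero,
      Finset.add_sum_erase _ (fun x => ⁅single x x (1 : K), B⁆) (Finset.mem_univ w),
      sum_lie_single_one]
  rw [hsum]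
  refine L.neg_mem (L.toSubmodule.sum_mem fun x hx => ?_)
  have hxw := Finset.ne_of_mem_erase hx
  by_cases hxu : x = u
  · subst hxu
    exact L.lie_mem hu (L.lie_mem hu hAL)
  by_cases hAxu : A x u = 0
  · have : ⁅single x x (1 : K), B⁆ = 0 := by
      rw [lie_single_lie_single_of_ne A hxu, hAxu, ← hA.apply u x, hAxu]
      simp
    exact this ▸ L.zero_mem
  · exact L.lie_mem (hnbr x hxu hxw hAxu) (L.lie_mem hu hAL)

theorem single_mem_of_lie_lie_mem [NeZero (2 : K)] (hA : A.IsSymm) {u w : ι} (huw : u ≠ w)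
    (hAuw : A u w ≠ 0) (hu : single u u (1 : K) ∈ L)
    (h : ⁅single w w (1 : K), ⁅single u u (1 : K), A⁆⁆ ∈ L) :
    single u w (1 : K) ∈ L ∧ single w u (1 : K) ∈ L :=
  single_mem_of_single_add_single_mem huw hu (single_add_single_mem_of_lie_lie_mem hA huw hAuw h)

variable {G : SimpleGraph ι}

theorem single_diag_mem_of_zeroForces [NeZero (2 : K)] (hA : A.IsSymm) (hAL : A ∈ L)
    (hG : ∀ i j, G.Adj i j ↔ i ≠ j ∧ A i j ≠ 0) {S : Set ι}
    (hS : ∀ j ∈ S, single j j (1 : K) ∈ L) {v : ι} (hv : ZeroForces G S v) :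
    single v v (1 : K) ∈ L := by
  induction hv with
  | init v hv => exact hS v hv
  | force u w _ hadj _ hu hnbr =>
    obtain ⟨huw, hAuw⟩ := (hG u w).1 hadj
    have hlie := lie_lie_mem_of_forall_neighbor hA hAL hu fun x hxu hxw hAxu =>
      hnbr x ((hG u x).2 ⟨Ne.symm hxu, hA.apply u x ▸ hAxu⟩) hxw
    obtain ⟨huw_mem, hwu_mem⟩ := single_mem_of_lie_lie_mem hA huw hAuw hu hlie
    exact single_diag_mem_of_single_mem hu huw_mem hwu_mem

theorem single_mem_of_reachable (hdiag : ∀ v, single v v (1 : K) ∈ L)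
    (hadj : ∀ u w, G.Adj u w → single u w (1 : K) ∈ L) {u v : ι} (h : G.Reachable u v) :
    single u v (1 : K) ∈ L := by
  rw [SimpleGraph.reachable_iff_reflTransGen] at h
  induction h with
  | refl => exact hdiag u
  | @tail b c _ hbc ih =>
    by_cases huc : u = c
    · exact huc ▸ hdiag u
    · have hcu : single b c (1 : K) * single u b 1 = 0 :=
        single_mul_single_of_ne _ _ _ _ (Ne.symm huc) _
      simpa [Ring.lie_def, hcu] using L.lie_mem ih (hadj b c hbc)

end LieSubalgebra

theorem stmt_14_general (n : ℕ) (A : Matrix (Fin n) (Fin n) ℝ) (hA : A.IsSymm)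
    (G : SimpleGraph (Fin n)) (hG : ∀ i j, G.Adj i j ↔ i ≠ j ∧ A i j ≠ 0)
    (hconn : G.Connected)
    (S : Set (Fin n)) (hzf : IsZeroForcingSet G S) :
    LieSubalgebra.lieSpan ℝ (Matrix (Fin n) (Fin n) ℝ)
        ({A} ∪ {M | ∃ j ∈ S, M = vecMulVec (Pi.single j 1) (Pi.single j 1)}) = ⊤ := by
  set L := LieSubalgebra.lieSpan ℝ (Matrix (Fin n) (Fin n) ℝ)
    ({A} ∪ {M | ∃ j ∈ S, M = vecMulVec (Pi.single j 1) (Pi.single j 1)})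
  have hAL : A ∈ L := LieSubalgebra.subset_lieSpan (Or.inl rfl)
  have hS : ∀ j ∈ S, single j j (1 : ℝ) ∈ L := fun j hj => by
    rw [single_eq_single_vecMulVec_single]
    exact LieSubalgebra.subset_lieSpan (Or.inr ⟨j, hj, rfl⟩)
  have hdiag v : single v v (1 : ℝ) ∈ L :=
    LieSubalgebra.single_diag_mem_of_zeroForces hA hAL hG hS (hzf v)
  have hadj u w (huw : G.Adj u w) : single u w (1 : ℝ) ∈ L := by
    obtain ⟨hne, hAuw⟩ := (hG u w).1 huw
    exact (LieSubalgebra.single_mem_of_lie_lie_mem hA hne hAuw (hdiag u)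
      (L.lie_mem (hdiag w) (L.lie_mem (hdiag u) hAL))).1
  exact LieSubalgebra.eq_top_of_single_mem fun u v =>
    LieSubalgebra.single_mem_of_reachable hdiag hadj (hconn u v)

/-- If G(A) is connected, all nonzero off-diagonal entries of the real
symmetric matrix A have the same sign, and S is a zero forcing set of G(A), then the real
Lie algebra generated by A and {e_j e_jᵀ : j ∈ S} equals gl(n,ℝ). -/
theorem stmt_14 (n : ℕ) (A : Matrix (Fin n) (Fin n) ℝ) (hA : A.IsSymm)
    (G : SimpleGraph (Fin n)) (hG : ∀ i j, G.Adj i j ↔ i ≠ j ∧ A i j ≠ 0)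
    (hconn : G.Connected)
    (hsign : (∀ i j, i ≠ j → 0 ≤ A i j) ∨ (∀ i j, i ≠ j → A i j ≤ 0))
    (S : Set (Fin n)) (hzf : IsZeroForcingSet G S) :
    LieSubalgebra.lieSpan ℝ (Matrix (Fin n) (Fin n) ℝ)
        ({A} ∪ {M | ∃ j ∈ S, M = vecMulVec (Pi.single j 1) (Pi.single j 1)}) = ⊤ :=
  stmt_14_general n A hA G hG hconn S hzf
end

section
/- For the path graph P₄ on vertices 1–2–3–4 with adjacency matrix A, the walk matrix [e₂, Ae₂, A²e₂, A³e₂] has rank 4 (it equals the matrix with rows (0,1,0,2), (1,0,2,0), (0,1,0,3), (0,0,1,0)), even though {2} is not a zero forcing set of P₄. -/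
/-!
The walk matrix is computed entrywise; its determinant is `1`, so it has full rank. For zero
forcing, `{2}` is closed under the forcing rule: the only black vertex, `2`, always has the two
white neighbours `1` and `3`, so nothing is ever forced. (Vertices are `Fin 4`, so the
paper's vertex `k` is `k - 1` here.)
-/

open Matrix

theorem ZeroForces.mem_of_forall_two_outside {V : Type*} {G : SimpleGraph V} {S T : Set V}
    (hST : S ⊆ T) (hT : ∀ u ∈ T, ∀ w ∉ T, G.Adj u w → ∃ x ∉ T, G.Adj u x ∧ x ≠ w)
    {v : V} (hv : ZeroForces G S v) : v ∈ T := by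
  induction hv with
  | init v hv => exact hST hv
  | force u w _ huw _ hu hothers =>
    by_contra hw
    obtain ⟨x, hx, hux, hxw⟩ := hT u hu w hw huw
    exact hx (hothers x hux hxw)

theorem rank_path_four_walk_matrix :
    (!![0, 1, 0, 2; 1, 0, 2, 0; 0, 1, 0, 3; 0, 0, 1, 0] : Matrix (Fin 4) (Fin 4) ℝ).rank = 4 := by
  have hdet : (!![0, 1, 0, 2; 1, 0, 2, 0; 0, 1, 0, 3; 0, 0, 1, 0] :
      Matrix (Fin 4) (Fin 4) ℝ).det = 1 := by
    simp [det_succ_row_zero, Fin.sum_univ_succ, Fin.succAbove]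
    norm_num
  have hunit : IsUnit (!![0, 1, 0, 2; 1, 0, 2, 0; 0, 1, 0, 3; 0, 0, 1, 0] :
      Matrix (Fin 4) (Fin 4) ℝ) := by
    rw [isUnit_iff_isUnit_det, hdet]
    exact isUnit_one
  simpa using rank_of_isUnit _ hunit

/-- For the path P₄ with adjacency matrix A, the walk matrix
[e₂, Ae₂, A²e₂, A³e₂] has rank 4 (it equals the displayed matrix), even though {2} is not
a zero forcing set of P₄. -/
theorem stmt_16 (A : Matrix (Fin 4) (Fin 4) ℝ)
    (hA : A = !![0, 1, 0, 0; 1, 0, 1, 0; 0, 1, 0, 1; 0, 0, 1, 0])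
    (G : SimpleGraph (Fin 4)) (hG : ∀ i j, G.Adj i j ↔ i ≠ j ∧ A i j ≠ 0) :
    (Matrix.of fun i j : Fin 4 => ((A ^ (j : ℕ)) *ᵥ Pi.single 1 1) i)
        = !![0, 1, 0, 2; 1, 0, 2, 0; 0, 1, 0, 3; 0, 0, 1, 0] ∧
    (Matrix.of fun i j : Fin 4 => ((A ^ (j : ℕ)) *ᵥ Pi.single 1 1) i).rank = 4 ∧
    ¬ IsZeroForcingSet G {1} := by
  have hwalk : (Matrix.of fun i j : Fin 4 => ((A ^ (j : ℕ)) *ᵥ Pi.single 1 1) i)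
      = !![0, 1, 0, 2; 1, 0, 2, 0; 0, 1, 0, 3; 0, 0, 1, 0] := by
    subst hA
    ext i j
    fin_cases j <;> fin_cases i <;>
      simp [pow_succ', mulVec, dotProduct, Pi.single_apply] <;> norm_num
  have hadj : ∀ w, G.Adj 1 w ↔ w = 0 ∨ w = 2 := by
    subst hA
    intro w
    rw [hG]
    fin_cases w <;> simp
  refine ⟨hwalk, hwalk ▸ rank_path_four_walk_matrix, fun hzf => ?_⟩
  have hclosed : ∀ u ∈ ({1} : Set (Fin 4)), ∀ w ∉ ({1} : Set (Fin 4)), G.Adj u w →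
      ∃ x ∉ ({1} : Set (Fin 4)), G.Adj u x ∧ x ≠ w := by
    rintro u rfl w - huw
    rcases (hadj w).1 huw with rfl | rfl
    · exact ⟨2, by decide, (hadj 2).2 (Or.inr rfl), by decide⟩
    · exact ⟨0, by decide, (hadj 0).2 (Or.inl rfl), by decide⟩
  exact absurd ((hzf 0).mem_of_forall_two_outside subset_rfl hclosed) (by decide)
end

section
/- Let B = {b₁,…,b_r} be a basis for the column space of the extended walk matrix W̃(A,Z) of a real symmetric n×n matrix A and Z = {z₁,…,z_s} ⊂ ℝⁿ. Then span P(A,Z) = span{ b_k b_jᵀ : 1 ≤ k,j ≤ r }, and consequently if rank W̃(A,Z) = r < n then dim span P(A,Z) ≤ r² < n², so P(A,Z) does not span ℝ^{n×n}. -/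
/-!
For symmetric `A`, each generator `A^m z_k z_jᵀ A^ℓ` of `P(A,Z)` is the outer product
`(A^m z_k)(A^ℓ z_j)ᵀ` of two columns of `W̃(A,Z)`. Since the outer product is bilinear, the span
of all outer products `u vᵀ` with `u ∈ S`, `v ∈ T` depends only on `span S` and `span T`; so
replacing the columns of `W̃(A,Z)` by the basis `B` of their span leaves `span P(A,Z)` unchanged.
The `r²` outer products `b_k b_jᵀ` then bound its dimension, which is `< n²` when `r < n`.
-/

open Matrix

namespace Matrix

variable {R m n : Type*} [CommSemiring R]

theorem span_image2_vecMulVec (S : Set (m → R)) (T : Set (n → R)) :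
    Submodule.span R (Set.image2 vecMulVec S T) =
      Submodule.map₂ (vecMulVecBilin R R) (Submodule.span R S) (Submodule.span R T) := by
  simp only [Submodule.map₂_span_span, vecMulVecBilin_apply_apply]

theorem span_image2_vecMulVec_congr {S S' : Set (m → R)} {T T' : Set (n → R)}
    (hS : Submodule.span R S = Submodule.span R S')
    (hT : Submodule.span R T = Submodule.span R T') :
    Submodule.span R (Set.image2 vecMulVec S T) = Submodule.span R (Set.image2 vecMulVec S' T') := by
  rw [span_image2_vecMulVec, span_image2_vecMulVec, hS, hT]

theorem finrank_span_image2_vecMulVec_range_le [StrongRankCondition R] {ι κ : Type*}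
    [Fintype ι] [Fintype κ] (b : ι → m → R) (c : κ → n → R) :
    Module.finrank R (Submodule.span R (Set.image2 vecMulVec (Set.range b) (Set.range c))) ≤
      Fintype.card ι * Fintype.card κ := by
  rw [Set.image2_range, ← Fintype.card_prod]
  exact finrank_range_le_card _

theorem mul_vecMulVec_mul [Fintype m] [Fintype n] (M : Matrix m m R) (u : m → R) (v : n → R)
    (N : Matrix n n R) : M * vecMulVec u v * N = vecMulVec (M *ᵥ u) (Nᵀ *ᵥ v) := by
  rw [mul_vecMulVec, vecMulVec_mul, mulVec_transpose]

theorem IsSymm.setOf_pow_mul_vecMulVec_mul_pow_eq_image2 {ι : Type*} [Fintype n]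
    [DecidableEq n] {A : Matrix n n R} (hA : A.IsSymm) (N : ℕ) (z : ι → n → R) :
    {M : Matrix n n R | ∃ (k j : ι) (m ℓ : Fin N),
        M = A ^ (m : ℕ) * vecMulVec (z k) (z j) * A ^ (ℓ : ℕ)} =
      Set.image2 vecMulVec {v | ∃ (k : ι) (m : Fin N), v = A ^ (m : ℕ) *ᵥ z k}
        {v | ∃ (k : ι) (m : Fin N), v = A ^ (m : ℕ) *ᵥ z k} := by
  have hgen : ∀ k j (m ℓ : Fin N), A ^ (m : ℕ) * vecMulVec (z k) (z j) * A ^ (ℓ : ℕ) =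
      vecMulVec (A ^ (m : ℕ) *ᵥ z k) (A ^ (ℓ : ℕ) *ᵥ z j) := fun k j m ℓ => by
    rw [mul_vecMulVec_mul, (hA.pow ℓ).eq]
  ext M
  constructor
  · rintro ⟨k, j, m, ℓ, rfl⟩
    exact ⟨_, ⟨k, m, rfl⟩, _, ⟨j, ℓ, rfl⟩, (hgen k j m ℓ).symm⟩
  · rintro ⟨_, ⟨k, m, rfl⟩, _, ⟨j, ℓ, rfl⟩, rfl⟩
    exact ⟨k, j, m, ℓ, (hgen k j m ℓ).symm⟩

end Matrix

theorem stmt_17_general (n s r : ℕ) (A : Matrix (Fin n) (Fin n) ℝ) (hA : A.IsSymm)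
    (z : Fin s → (Fin n → ℝ)) (b : Fin r → (Fin n → ℝ))
    (hspan : Submodule.span ℝ (Set.range b)
      = Submodule.span ℝ {v : Fin n → ℝ | ∃ (k : Fin s) (m : Fin n), v = A ^ (m : ℕ) *ᵥ z k}) :
    Submodule.span ℝ
        {M : Matrix (Fin n) (Fin n) ℝ | ∃ (k j : Fin s) (m ℓ : Fin n),
          M = A ^ (m : ℕ) * vecMulVec (z k) (z j) * A ^ (ℓ : ℕ)}
      = Submodule.span ℝ
        {M : Matrix (Fin n) (Fin n) ℝ | ∃ k j : Fin r, M = vecMulVec (b k) (b j)} ∧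
    (r < n →
      Module.finrank ℝ (Submodule.span ℝ
        {M : Matrix (Fin n) (Fin n) ℝ | ∃ (k j : Fin s) (m ℓ : Fin n),
          M = A ^ (m : ℕ) * vecMulVec (z k) (z j) * A ^ (ℓ : ℕ)}) ≤ r ^ 2 ∧
      Submodule.span ℝ
        {M : Matrix (Fin n) (Fin n) ℝ | ∃ (k j : Fin s) (m ℓ : Fin n),
          M = A ^ (m : ℕ) * vecMulVec (z k) (z j) * A ^ (ℓ : ℕ)} ≠ ⊤) := by
  have hB : {M : Matrix (Fin n) (Fin n) ℝ | ∃ k j : Fin r, M = vecMulVec (b k) (b j)} =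
      Set.image2 vecMulVec (Set.range b) (Set.range b) := by
    rw [Set.image2_range]
    ext M
    simp [eq_comm]
  have hspanP := span_image2_vecMulVec_congr hspan.symm hspan.symm
  rw [← hA.setOf_pow_mul_vecMulVec_mul_pow_eq_image2 n z, ← hB] at hspanP
  have hrank := finrank_span_image2_vecMulVec_range_le b b
  rw [← hB, Fintype.card_fin, ← sq] at hrank
  refine ⟨hspanP, fun hrn => ⟨hspanP ▸ hrank, fun htop => ?_⟩⟩
  rw [← hspanP, htop, finrank_top, Module.finrank_matrix, Module.finrank_self, Fintype.card_fin,
    mul_one, ← sq] at hrank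
  exact absurd hrank (Nat.pow_lt_pow_left hrn two_ne_zero).not_ge

/-- If b₁,…,b_r is a basis for the column space of the extended walk matrix
W̃(A,Z), then span P(A,Z) = span{b_k b_jᵀ}, and if r < n then
dim span P(A,Z) ≤ r² < n², so P(A,Z) does not span ℝ^{n×n}. -/
theorem stmt_17 (n s r : ℕ) (A : Matrix (Fin n) (Fin n) ℝ) (hA : A.IsSymm)
    (z : Fin s → (Fin n → ℝ)) (b : Fin r → (Fin n → ℝ))
    (hind : LinearIndependent ℝ b)
    (hspan : Submodule.span ℝ (Set.range b)
      = Submodule.span ℝ {v : Fin n → ℝ | ∃ (k : Fin s) (m : Fin n), v = A ^ (m : ℕ) *ᵥ z k}) :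
    Submodule.span ℝ
        {M : Matrix (Fin n) (Fin n) ℝ | ∃ (k j : Fin s) (m ℓ : Fin n),
          M = A ^ (m : ℕ) * vecMulVec (z k) (z j) * A ^ (ℓ : ℕ)}
      = Submodule.span ℝ
        {M : Matrix (Fin n) (Fin n) ℝ | ∃ k j : Fin r, M = vecMulVec (b k) (b j)} ∧
    (r < n →
      Module.finrank ℝ (Submodule.span ℝ
        {M : Matrix (Fin n) (Fin n) ℝ | ∃ (k j : Fin s) (m ℓ : Fin n),
          M = A ^ (m : ℕ) * vecMulVec (z k) (z j) * A ^ (ℓ : ℕ)}) ≤ r ^ 2 ∧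
      Submodule.span ℝ
        {M : Matrix (Fin n) (Fin n) ℝ | ∃ (k j : Fin s) (m ℓ : Fin n),
          M = A ^ (m : ℕ) * vecMulVec (z k) (z j) * A ^ (ℓ : ℕ)} ≠ ⊤) :=
  stmt_17_general n s r A hA z b hspan
end
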